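/- arXiv:1706.01806 — 3 statements merged into one kernel-verified Lean document; each statement's English description precedes it below -/
import Mathlib

section
/- A square hollow matrix over the free associative algebra is not full. That is, if an n×n matrix A over K⟨X⟩ contains a k×l zero submatrix with k+l > n, then A can be factored as A = T·U with T of size n×m and U of size m×n for some m < n. -/
/-- A square hollow matrix over the free associative algebra is not full. -/
theorem hollow_not_full {K : Type*} [Field K] {X : Type*} {n k l : ℕ}
    (A : Matrix (Fin n) (Fin n) (FreeAlgebra K X))
    (r : Fin k → Fin n) (c : Fin l → Fin n)
    (hr : Function.Injective r) (hc : Function.Injective c)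
    (hkl : n < k + l)
    (hz : ∀ i j, A (r i) (c j) = 0) :
    ∃ m, m < n ∧ ∃ (T : Matrix (Fin n) (Fin m) (FreeAlgebra K X))
      (U : Matrix (Fin m) (Fin n) (FreeAlgebra K X)), A = T * U := by
  classical
  have hk : k ≤ n := by simpa using Fintype.card_le_of_injective r hr
  have hl : l ≤ n := by simpa using Fintype.card_le_of_injective c hc
  set S : Set (Fin n) := (Set.range r)ᶜ with hSdef
  set Q : Set (Fin n) := (Set.range c)ᶜ with hQdef
  have cardS : Fintype.card S = n - k := by
    rw [show Fintype.card S = Fintype.card ↥((Set.range r)ᶜ) from rfl, Fintype.card_compl_set, Set.card_range_of_injective hr]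
    simp
  have cardQ : Fintype.card Q = n - l := by
    rw [show Fintype.card Q = Fintype.card ↥((Set.range c)ᶜ) from rfl, Fintype.card_compl_set, Set.card_range_of_injective hc]
    simp
  set m : ℕ := Fintype.card (↥S ⊕ ↥Q) with hmdef
  have hm : m = (n - k) + (n - l) := by
    rw [hmdef, Fintype.card_sum, cardS, cardQ]
  refine ⟨m, by omega, ?_⟩
  set e : Fin m ≃ (↥S ⊕ ↥Q) := (Fintype.equivFin (↥S ⊕ ↥Q)).symm with hedef
  set T : Matrix (Fin n) (Fin m) (FreeAlgebra K X) :=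
    fun i a => Sum.elim (fun s : ↥S => if i = s.1 then 1 else 0)
      (fun q : ↥Q => A i q.1) (e a) with hTdef
  set U : Matrix (Fin m) (Fin n) (FreeAlgebra K X) :=
    fun a j => Sum.elim (fun s : ↥S => if j ∈ Set.range c then A s.1 j else 0)
      (fun q : ↥Q => if j = q.1 then 1 else 0) (e a) with hUdef
  refine ⟨T, U, ?_⟩
  ext i j
  rw [Matrix.mul_apply]
  have hsum : ∑ a : Fin m, T i a * U a j
      = ∑ b : ↥S ⊕ ↥Q,
          Sum.elim (fun s : ↥S => if i = s.1 then 1 else 0) (fun q : ↥Q => A i q.1) b *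
          Sum.elim (fun s : ↥S => if j ∈ Set.range c then A s.1 j else 0)
            (fun q : ↥Q => if j = q.1 then 1 else 0) b := by
    refine Fintype.sum_equiv e _ _ (fun a => rfl)
  rw [hsum, Fintype.sum_sum_type]
  by_cases hj : j ∈ Set.range c
  · have h2 : ∑ q : ↥Q, A i q.1 * (Sum.elim (fun s : ↥S => if j ∈ Set.range c then A s.1 j else 0)
        (fun q : ↥Q => if j = q.1 then 1 else 0) (Sum.inr q)) = 0 := by
      refine Finset.sum_eq_zero fun q _ => ?_
      have : j ≠ q.1 := fun h => q.2 (h ▸ hj)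
      simp [this]
    by_cases hi : i ∈ Set.range r
    · obtain ⟨i', rfl⟩ := hi
      obtain ⟨j', rfl⟩ := hj
      rw [hz i' j']
      simp only [Sum.elim_inl, Sum.elim_inr] at h2 ⊢
      rw [h2, add_zero]
      refine (Finset.sum_eq_zero fun s _ => ?_).symm
      have : r i' ≠ s.1 := fun h => s.2 (h ▸ Set.mem_range_self i')
      simp [this]
    · have hiS : i ∈ S := hi
      simp only [Sum.elim_inl, Sum.elim_inr] at h2 ⊢
      rw [h2, add_zero]
      rw [Finset.sum_eq_single (⟨i, hiS⟩ : ↥S)]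
      · simp [hj]
      · intro s _ hs
        have : i ≠ s.1 := fun h => hs (Subtype.ext h.symm)
        simp [this]
      · intro h; exact absurd (Finset.mem_univ _) h
  · have hjQ : j ∈ Q := hj
    simp only [Sum.elim_inl, Sum.elim_inr]
    have h1 : ∑ s : ↥S, (if i = s.1 then 1 else 0) *
        (if j ∈ Set.range c then A s.1 j else 0) = 0 := by
      refine Finset.sum_eq_zero fun s _ => by simp [hj]
    rw [h1, zero_add]
    rw [Finset.sum_eq_single (⟨j, hjQ⟩ : ↥Q)]
    · simp
    · intro q _ hq
      have : j ≠ q.1 := fun h => hq (Subtype.ext h.symm)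
      simp [this]
    · intro h; exact absurd (Finset.mem_univ _) h
end

section
/- Let 0 ≠ p, q ∈ K⟨X⟩ be given by minimal admissible linear systems of dimensions n_p and n_q respectively (both ≥ 2). Then the product pq has a minimal admissible linear system of dimension n_p + n_q − 1; equivalently, rank(pq) = rank(p) + rank(q) − 1. -/
open FreeAlgebra

/-- A matrix over `K⟨X⟩` is a linear pencil `A₀ ⊗ 1 + Σℓ Aℓ ⊗ xℓ`. -/
def Matrix.IsLinearPencil {K : Type*} [Field K] {X : Type*} [Fintype X] {n : ℕ}
    (A : Matrix (Fin n) (Fin n) (FreeAlgebra K X)) : Prop :=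
  ∃ (A₀ : Matrix (Fin n) (Fin n) K) (Ax : X → Matrix (Fin n) (Fin n) K),
    ∀ i j, A i j = algebraMap K (FreeAlgebra K X) (A₀ i j) +
      ∑ ℓ : X, Ax ℓ i j • ι K ℓ

/-- `p` admits an admissible linear system of dimension `n`: a full (here:
invertible) linear pencil `A` and `v ∈ Kⁿ` with `p = (A⁻¹ v)₁ = e₁ A⁻¹ v`. -/
def HasALS {K : Type*} [Field K] {X : Type*} [Fintype X]
    (p : FreeAlgebra K X) (n : ℕ) : Prop :=
  ∃ (hn : 0 < n) (A B : Matrix (Fin n) (Fin n) (FreeAlgebra K X)) (v : Fin n → K),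
    A.IsLinearPencil ∧ A * B = 1 ∧ B * A = 1 ∧
    p = ∑ j, B ⟨0, hn⟩ j * algebraMap K (FreeAlgebra K X) (v j)

/-- The rank of `p`: the minimal dimension of an admissible linear system. -/
noncomputable def alsRank {K : Type*} [Field K] {X : Type*} [Fintype X]
    (p : FreeAlgebra K X) : ℕ :=
  sInf {n | HasALS p n}

/-!
Identify `K⟨X⟩` with the monoid algebra `K[X*]` and write `w⁻¹f` for the left quotient
`v ↦ f (w v)`. The rank of `f ≠ 0` is its Hankel rank, the dimension of the span `Q(f)` of all
`w⁻¹f`. If `A g = v` is an ALS for `f`, the constant part of `A` is invertible, so the span of the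
entries of `g` is stable under letter quotients and hence contains `Q(f)`. Conversely, the
matrices `Mℓ` of the letter quotients on a basis of `Q(f)` starting with `f` give a pencil
`1 - Σ xℓ Mℓᵀ` solved by that basis, and it is invertible because words longer than `deg f`
annihilate `Q(f)`, which makes `Σ xℓ Mℓᵀ` nilpotent.

For a product, `Q(pq) = Q(p) q ⊕ Q⁺(q)`, where `Q⁺(q)` is spanned by the quotients of `q` by
nonempty words. The defect `w⁻¹(pq) - (w⁻¹p) q` always lies in `Q⁺(q)`. Conversely, if `w₀` is a
longest word of `p`, then `(w₀a)⁻¹(pq) ≡ p(w₀) a⁻¹q` modulo quotients of `q` by words longer than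
`a`, so `Q⁺(q) ⊆ Q(pq)` by downward induction on the length of `a`. The sum is direct because
`Q⁺(q)` has degree `< deg q`. The case `p = 1` gives `dim Q(q) = 1 + dim Q⁺(q)`, hence
`rank(pq) = rank p + rank q - 1`.
-/

open MonoidAlgebra Module Submodule
open scoped Matrix

noncomputable section

section LinearSystems

variable (K : Type*) [Field K] {X : Type*} [Fintype X] {R : Type*} [Ring R] [Algebra K R]

def Matrix.IsLinearPencilIn (x : X → R) {n : ℕ} (A : Matrix (Fin n) (Fin n) R) : Prop :=
  ∃ (A₀ : Matrix (Fin n) (Fin n) K) (Ax : X → Matrix (Fin n) (Fin n) K),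
    ∀ i j, A i j = algebraMap K R (A₀ i j) + ∑ ℓ : X, Ax ℓ i j • x ℓ

def HasALSIn (x : X → R) (p : R) (n : ℕ) : Prop :=
  ∃ (hn : 0 < n) (A B : Matrix (Fin n) (Fin n) R) (v : Fin n → K),
    A.IsLinearPencilIn K x ∧ A * B = 1 ∧ B * A = 1 ∧
    p = ∑ j, B ⟨0, hn⟩ j * algebraMap K R (v j)

variable {K} {S : Type*} [Ring S] [Algebra K S]

theorem hasALS_iff_hasALSIn {p : FreeAlgebra K X} {n : ℕ} :
    HasALS p n ↔ HasALSIn K (ι K) p n :=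
  Iff.rfl

theorem HasALSIn.map {x : X → R} {p : R} {n : ℕ} (h : HasALSIn K x p n) (φ : R →ₐ[K] S) :
    HasALSIn K (φ ∘ x) (φ p) n := by
  obtain ⟨hn, A, B, v, ⟨A₀, Ax, hA⟩, hAB, hBA, rfl⟩ := h
  refine ⟨hn, φ.mapMatrix A, φ.mapMatrix B, v, ⟨A₀, Ax, fun i j => ?_⟩, ?_, ?_, ?_⟩
  · simp [hA]
  · rw [← map_mul, hAB, map_one]
  · rw [← map_mul, hBA, map_one]
  · simp

theorem hasALSIn_iff_mulVec {x : X → R} {p : R} {n : ℕ} :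
    HasALSIn K x p n ↔ ∃ (hn : 0 < n) (A B : Matrix (Fin n) (Fin n) R) (g : Fin n → R)
      (v : Fin n → K), A.IsLinearPencilIn K x ∧ A * B = 1 ∧ B * A = 1 ∧
      A *ᵥ g = algebraMap K R ∘ v ∧ g ⟨0, hn⟩ = p := by
  constructor
  · rintro ⟨hn, A, B, v, hA, hAB, hBA, rfl⟩
    exact ⟨hn, A, B, B *ᵥ (algebraMap K R ∘ v), v, hA, hAB, hBA,
      by rw [Matrix.mulVec_mulVec, hAB, Matrix.one_mulVec], rfl⟩
  · rintro ⟨hn, A, B, g, v, hA, hAB, hBA, hg, rfl⟩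
    refine ⟨hn, A, B, v, hA, hAB, hBA, ?_⟩
    change _ = (B *ᵥ (algebraMap K R ∘ v)) _
    rw [← hg, Matrix.mulVec_mulVec, hBA, Matrix.one_mulVec]

end LinearSystems

section LeftQuotient

variable {K : Type*} [Field K] {X : Type*}

def leftQuot (w : FreeMonoid X) : K[FreeMonoid X] →ₗ[K] K[FreeMonoid X] :=
  (coeffLinearEquiv K).symm.toLinearMap ∘ₗ
    Finsupp.lcomapDomain (w * ·) (mul_right_injective w) ∘ₗ (coeffLinearEquiv K).toLinearMap

@[simp]
theorem coeff_leftQuot (w : FreeMonoid X) (f : K[FreeMonoid X]) (v : FreeMonoid X) :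
    (leftQuot w f).coeff v = f.coeff (w * v) :=
  rfl

@[simp]
theorem leftQuot_one (f : K[FreeMonoid X]) : leftQuot 1 f = f := by
  ext; simp

theorem leftQuot_mul (u w : FreeMonoid X) (f : K[FreeMonoid X]) :
    leftQuot (u * w) f = leftQuot w (leftQuot u f) := by
  ext; simp [mul_assoc]

theorem ext_leftQuot {f g : K[FreeMonoid X]} (h₁ : f.coeff 1 = g.coeff 1)
    (h : ∀ ℓ, leftQuot (FreeMonoid.of ℓ) f = leftQuot (FreeMonoid.of ℓ) g) : f = g := by
  ext w
  cases w with
  | one => exact h₁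
  | of_mul ℓ w => simpa using congr(($(h ℓ)).coeff w)

theorem single_one_mul_eq_smul (c : K) (g : K[FreeMonoid X]) : single 1 c * g = c • g :=
  (Algebra.smul_def c g).symm

@[simp]
theorem leftQuot_single_of_mul [DecidableEq X] (ℓ m : X) (c : K) (g : K[FreeMonoid X]) :
    leftQuot (FreeMonoid.of ℓ) (single (FreeMonoid.of m) c * g) =
      if m = ℓ then c • g else 0 := by
  ext v
  split_ifs with h
  · simp [h, coeff_single_mul_mul]
  · exact coeff_single_mul_of_forall_mul_ne _ _ fun d hd => h (List.cons_eq_cons.1 hd).1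

@[simp]
theorem leftQuot_single_one (ℓ : X) (c : K) : leftQuot (FreeMonoid.of ℓ) (single 1 c) = 0 := by
  ext v
  simp

variable [Fintype X]

theorem eq_single_one_add_sum_single_mul_leftQuot (f : K[FreeMonoid X]) :
    f = single 1 (f.coeff 1) +
      ∑ ℓ, single (FreeMonoid.of ℓ) 1 * leftQuot (FreeMonoid.of ℓ) f := by
  classical
  refine ext_leftQuot ?_ fun ℓ => ?_
  · simp
  · simp

theorem leftQuot_of_mul (ℓ : X) (f g : K[FreeMonoid X]) :
    leftQuot (FreeMonoid.of ℓ) (f * g) =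
      leftQuot (FreeMonoid.of ℓ) f * g + f.coeff 1 • leftQuot (FreeMonoid.of ℓ) g := by
  classical
  conv_lhs => rw [eq_single_one_add_sum_single_mul_leftQuot f]
  simp [add_mul, Finset.sum_mul, mul_assoc, single_one_mul_eq_smul, add_comm]

end LeftQuotient

section Degree

variable {K : Type*} [Field K] {X : Type*}

def totalDegree (f : K[FreeMonoid X]) : ℕ :=
  f.coeff.support.sup FreeMonoid.length

theorem length_le_totalDegree {f : K[FreeMonoid X]} {w : FreeMonoid X} (h : f.coeff w ≠ 0) :
    w.length ≤ totalDegree f :=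
  Finset.le_sup (Finsupp.mem_support_iff.2 h)

theorem coeff_eq_zero_of_totalDegree_lt {f : K[FreeMonoid X]} {w : FreeMonoid X}
    (h : totalDegree f < w.length) : f.coeff w = 0 :=
  Finsupp.notMem_support_iff.1 fun hw => (Finset.le_sup hw).not_gt h

theorem leftQuot_eq_zero_of_totalDegree_lt {f : K[FreeMonoid X]} {w : FreeMonoid X}
    (h : totalDegree f < w.length) : leftQuot w f = 0 := by
  ext v
  simpa using coeff_eq_zero_of_totalDegree_lt (f := f) (w := w * v)
    (by rw [FreeMonoid.length_mul]; omega)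

theorem exists_coeff_ne_zero_length_eq_totalDegree {f : K[FreeMonoid X]} (hf : f ≠ 0) :
    ∃ w, f.coeff w ≠ 0 ∧ w.length = totalDegree f := by
  obtain ⟨w, hw, hmax⟩ := Finset.exists_mem_eq_sup f.coeff.support
    (Finsupp.support_nonempty_iff.2 (coeff_eq_zero.not.2 hf)) FreeMonoid.length
  exact ⟨w, Finsupp.mem_support_iff.1 hw, hmax.symm⟩

theorem exists_coeff_mul_ne_zero {f g : K[FreeMonoid X]} (hf : f ≠ 0) (hg : g ≠ 0) :
    ∃ w, totalDegree g ≤ w.length ∧ (f * g).coeff w ≠ 0 := by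
  obtain ⟨u, hu, hul⟩ := exists_coeff_ne_zero_length_eq_totalDegree hf
  obtain ⟨v, hv, hvl⟩ := exists_coeff_ne_zero_length_eq_totalDegree hg
  refine ⟨u * v, by rw [FreeMonoid.length_mul]; omega, ?_⟩
  rw [coeff_mul_mul_of_uniqueMul fun a b ha hb hab => ?_]
  · exact mul_ne_zero hu hv
  have ha' := length_le_totalDegree (Finsupp.mem_support_iff.1 ha)
  have hb' := length_le_totalDegree (Finsupp.mem_support_iff.1 hb)
  have hlen := congr_arg FreeMonoid.length hab
  simp only [FreeMonoid.length_mul] at hlen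
  have hau : a.length = u.length := by omega
  exact List.append_inj hab hau

end Degree

section QuotientSpan

variable {K : Type*} [Field K] {X : Type*}

def quotSpan (f : K[FreeMonoid X]) : Submodule K K[FreeMonoid X] :=
  span K (Set.range fun w => leftQuot w f)

def quotSpanAbove (k : ℕ) (f : K[FreeMonoid X]) : Submodule K K[FreeMonoid X] :=
  span K ((fun w => leftQuot w f) '' {w | k < w.length})

def hankelRank (f : K[FreeMonoid X]) : ℕ :=
  finrank K (quotSpan f)

theorem leftQuot_mem_quotSpan (w : FreeMonoid X) (f : K[FreeMonoid X]) :
    leftQuot w f ∈ quotSpan f :=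
  subset_span ⟨w, rfl⟩

theorem self_mem_quotSpan (f : K[FreeMonoid X]) : f ∈ quotSpan f := by
  simpa using leftQuot_mem_quotSpan 1 f

theorem leftQuot_mem_quotSpanAbove {k : ℕ} {w : FreeMonoid X} (hw : k < w.length)
    (f : K[FreeMonoid X]) : leftQuot w f ∈ quotSpanAbove k f :=
  subset_span ⟨w, hw, rfl⟩

theorem quotSpanAbove_le_quotSpan (k : ℕ) (f : K[FreeMonoid X]) :
    quotSpanAbove k f ≤ quotSpan f :=
  span_mono (Set.image_subset_range _ _)

theorem quotSpanAbove_antitone (f : K[FreeMonoid X]) : Antitone fun k => quotSpanAbove k f :=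
  fun _ _ hk => span_mono (Set.image_mono fun _ hw => lt_of_le_of_lt hk hw)

theorem quotSpan_le_of_mem {f : K[FreeMonoid X]} {G : Submodule K K[FreeMonoid X]} (hf : f ∈ G)
    (hG : ∀ ℓ, G ≤ G.comap (leftQuot (FreeMonoid.of ℓ))) : quotSpan f ≤ G := by
  have hGw : ∀ w, G ≤ G.comap (leftQuot w) := by
    intro w
    induction w with
    | one => intro z hz; simpa using hz
    | of ℓ => exact hG ℓ
    | mul u w hu hw => intro z hz; simpa [leftQuot_mul] using hw (hu hz)
  exact span_le.2 (Set.range_subset_iff.2 fun w => hGw w hf)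

theorem quotSpan_le_comap_leftQuot (w : FreeMonoid X) (f : K[FreeMonoid X]) :
    quotSpan f ≤ (quotSpan f).comap (leftQuot w) :=
  span_le.2 <| Set.range_subset_iff.2 fun u => by
    simpa [← leftQuot_mul] using leftQuot_mem_quotSpan (u * w) f

theorem quotSpan_le_ker_leftQuot {f : K[FreeMonoid X]} {w : FreeMonoid X}
    (hw : totalDegree f < w.length) : quotSpan f ≤ LinearMap.ker (leftQuot w) :=
  span_le.2 <| Set.range_subset_iff.2 fun u => by
    simpa [← leftQuot_mul] using leftQuot_eq_zero_of_totalDegree_lt (f := f) (w := u * w)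
      (by rw [FreeMonoid.length_mul]; omega)

theorem finite_range_leftQuot [Finite X] (f : K[FreeMonoid X]) :
    (Set.range fun w => leftQuot w f).Finite := by
  refine (((List.finite_length_le X (totalDegree f)).image fun w => leftQuot w f).union
    (Set.finite_singleton 0)).subset ?_
  rintro _ ⟨w, rfl⟩
  by_cases hw : w.length ≤ totalDegree f
  · exact Or.inl ⟨w, hw, rfl⟩
  · exact Or.inr (leftQuot_eq_zero_of_totalDegree_lt (by omega))

instance [Finite X] (f : K[FreeMonoid X]) : FiniteDimensional K (quotSpan f) :=
  FiniteDimensional.span_of_finite K (finite_range_leftQuot f)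

instance [Finite X] (k : ℕ) (f : K[FreeMonoid X]) : FiniteDimensional K (quotSpanAbove k f) :=
  Submodule.finiteDimensional_of_le (quotSpanAbove_le_quotSpan k f)

end QuotientSpan

section Product

variable {K : Type*} [Field K] {X : Type*}

theorem coeff_eq_zero_of_mem_quotSpanAbove {k : ℕ} {q z : K[FreeMonoid X]}
    (hz : z ∈ quotSpanAbove k q) {w : FreeMonoid X} (hw : totalDegree q ≤ k + w.length) :
    z.coeff w = 0 := by
  induction hz using Submodule.span_induction with
  | mem _ h =>
    obtain ⟨u, hu : k < u.length, rfl⟩ := h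
    exact coeff_eq_zero_of_totalDegree_lt (f := q) (w := u * w)
      (by rw [FreeMonoid.length_mul]; omega)
  | zero => rfl
  | add _ _ _ _ h₁ h₂ => simp [h₁, h₂]
  | smul c _ _ h => simp [h]

theorem disjoint_map_mulRight_quotSpanAbove_zero {q : K[FreeMonoid X]} (hq : q ≠ 0)
    (U : Submodule K K[FreeMonoid X]) :
    Disjoint (U.map (LinearMap.mulRight K q)) (quotSpanAbove 0 q) := by
  refine Submodule.disjoint_def.2 ?_
  rintro _ ⟨f, -, rfl⟩ hf
  by_contra hfq
  obtain ⟨w, hw, hne⟩ := exists_coeff_mul_ne_zero (left_ne_zero_of_mul hfq) hq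
  exact hne (coeff_eq_zero_of_mem_quotSpanAbove hf (by omega))

theorem quotSpan_one : quotSpan (1 : K[FreeMonoid X]) = K ∙ 1 := by
  refine le_antisymm (span_le.2 (Set.range_subset_iff.2 fun w => ?_))
    ((span_singleton_le_iff_mem _ _).2 (self_mem_quotSpan 1))
  cases w with
  | one => simp [mem_span_singleton_self]
  | of_mul ℓ w => simp [leftQuot_mul, one_def]

theorem hankelRank_one : hankelRank (1 : K[FreeMonoid X]) = 1 := by
  rw [hankelRank, quotSpan_one, finrank_span_singleton one_ne_zero]

variable [Fintype X]

theorem leftQuot_mul_sub_mem_quotSpanAbove_zero (u : FreeMonoid X) (p q : K[FreeMonoid X]) :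
    leftQuot u (p * q) - leftQuot u p * q ∈ quotSpanAbove 0 q := by
  induction u using FreeMonoid.inductionOn' generalizing p with
  | one => simp
  | of_mul ℓ u ih =>
    have hℓu := leftQuot_mem_quotSpanAbove (k := 0) (w := FreeMonoid.of ℓ * u) (by simp) q
    convert add_mem (ih (leftQuot (FreeMonoid.of ℓ) p)) (smul_mem _ (p.coeff 1) hℓu) using 1
    simp only [leftQuot_mul, leftQuot_of_mul, map_add, map_smul]
    abel

theorem leftQuot_mul_sub_smul_mem_quotSpanAbove {p : K[FreeMonoid X]} {w₀ : FreeMonoid X}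
    (hp : ∀ w, w₀.length < w.length → p.coeff w = 0) (a : FreeMonoid X)
    (q : K[FreeMonoid X]) :
    leftQuot (w₀ * a) (p * q) - p.coeff w₀ • leftQuot a q ∈ quotSpanAbove a.length q := by
  induction w₀ using FreeMonoid.inductionOn' generalizing p with
  | one =>
    have hp₁ : p = single 1 (p.coeff 1) := by
      ext w
      cases w with
      | one => simp
      | of_mul ℓ w => simpa using hp (FreeMonoid.of ℓ * w) (by simp)
    rw [hp₁, single_one_mul_eq_smul]
    simp
  | of_mul ℓ w₀ ih =>
    have h := ih (p := leftQuot (FreeMonoid.of ℓ) p) fun w hw =>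
      hp (FreeMonoid.of ℓ * w) (by simpa)
    have hℓw₀a := leftQuot_mem_quotSpanAbove (k := a.length)
      (w := FreeMonoid.of ℓ * (w₀ * a)) (by simp; omega) q
    convert add_mem h (smul_mem _ (p.coeff 1) hℓw₀a) using 1
    simp only [mul_assoc, leftQuot_mul, leftQuot_of_mul, map_add, map_smul, coeff_leftQuot]
    abel

theorem quotSpanAbove_le_quotSpan_mul {p : K[FreeMonoid X]} (hp : p ≠ 0) (k : ℕ)
    (q : K[FreeMonoid X]) : quotSpanAbove k q ≤ quotSpan (p * q) := by
  obtain ⟨w₀, hw₀, hlen⟩ := exists_coeff_ne_zero_length_eq_totalDegree hp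
  have htop : ∀ w, w₀.length < w.length → p.coeff w = 0 := fun w hw =>
    coeff_eq_zero_of_totalDegree_lt (hlen ▸ hw)
  suffices ∀ n k, totalDegree q ≤ n + k → quotSpanAbove k q ≤ quotSpan (p * q) from
    this _ k (Nat.le_add_right _ k)
  intro n
  induction n with
  | zero =>
    intro k hk
    refine span_le.2 ?_
    rintro _ ⟨w, hw : k < w.length, rfl⟩
    simp [leftQuot_eq_zero_of_totalDegree_lt (f := q) (w := w) (by omega)]
  | succ n ih =>
    intro k hk
    refine span_le.2 ?_
    rintro _ ⟨w, hw : k < w.length, rfl⟩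
    have hrem := quotSpanAbove_antitone q (Nat.succ_le_of_lt hw)
      (leftQuot_mul_sub_smul_mem_quotSpanAbove htop w q)
    have h := sub_mem (leftQuot_mem_quotSpan (w₀ * w) (p * q)) (ih (k + 1) (by omega) hrem)
    rw [sub_sub_cancel] at h
    exact (smul_mem_iff _ hw₀).1 h

theorem quotSpan_mul {p : K[FreeMonoid X]} (hp : p ≠ 0) (q : K[FreeMonoid X]) :
    quotSpan (p * q) = (quotSpan p).map (LinearMap.mulRight K q) ⊔ quotSpanAbove 0 q := by
  refine le_antisymm (span_le.2 (Set.range_subset_iff.2 fun u => ?_))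
    (sup_le (map_le_iff_le_comap.2 (span_le.2 (Set.range_subset_iff.2 fun u => ?_)))
      (quotSpanAbove_le_quotSpan_mul hp 0 q))
  · rw [SetLike.mem_coe, ← sub_add_cancel (leftQuot u (p * q)) (leftQuot u p * q)]
    exact add_mem (mem_sup_right (leftQuot_mul_sub_mem_quotSpanAbove_zero u p q))
      (mem_sup_left (mem_map_of_mem (leftQuot_mem_quotSpan u p)))
  · have h := sub_mem (leftQuot_mem_quotSpan u (p * q))
      (quotSpanAbove_le_quotSpan_mul hp 0 q (leftQuot_mul_sub_mem_quotSpanAbove_zero u p q))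
    simpa using h

theorem hankelRank_mul_eq_add_finrank_quotSpanAbove {p q : K[FreeMonoid X]} (hp : p ≠ 0) (hq : q ≠ 0) :
    hankelRank (p * q) = hankelRank p + finrank K (quotSpanAbove 0 q) := by
  have hinj : Function.Injective (LinearMap.mulRight K q) := mul_left_injective₀ hq
  have h := Submodule.finrank_sup_add_finrank_inf_eq
    ((quotSpan p).map (LinearMap.mulRight K q)) (quotSpanAbove 0 q)
  rwa [disjoint_iff.1 (disjoint_map_mulRight_quotSpanAbove_zero hq _), finrank_bot, add_zero,
    ← quotSpan_mul hp, ← LinearEquiv.finrank_eq (equivMapOfInjective _ hinj _)] at h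

theorem hankelRank_mul {p q : K[FreeMonoid X]} (hp : p ≠ 0) (hq : q ≠ 0) :
    hankelRank (p * q) + 1 = hankelRank p + hankelRank q := by
  have h := hankelRank_mul_eq_add_finrank_quotSpanAbove hp hq
  have h₁ := hankelRank_mul_eq_add_finrank_quotSpanAbove one_ne_zero hq
  rw [one_mul, hankelRank_one] at h₁
  omega

end Product

section LowerBound

variable {K : Type*} [Field K] {X : Type*}

def constCoeff : K[FreeMonoid X] →+* K where
  toFun f := f.coeff 1
  map_one' := coeff_one_one
  map_mul' f g := by
    simpa using coeff_mul_mul_of_uniqueMul (f := f) (g := g) (a0 := 1) (b0 := 1)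
      fun a b _ _ h => List.append_eq_nil_iff.1 h
  map_zero' := rfl
  map_add' _ _ := rfl

@[simp]
theorem constCoeff_apply (f : K[FreeMonoid X]) : constCoeff f = f.coeff 1 :=
  rfl

variable [Fintype X]

theorem leftQuot_pencilEntry_mul (ℓ : X) (c : K) (a : X → K) (g : K[FreeMonoid X]) :
    leftQuot (FreeMonoid.of ℓ)
        ((algebraMap K _ c + ∑ m, a m • single (FreeMonoid.of m) 1) * g) =
      c • leftQuot (FreeMonoid.of ℓ) g + a ℓ • g := by
  classical
  simp [add_mul, Finset.sum_mul, single_one_mul_eq_smul]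

theorem leftQuot_mem_span_of_mulVec_eq {n : ℕ} {A : Matrix (Fin n) (Fin n) K[FreeMonoid X]}
    {A₀ B₀ : Matrix (Fin n) (Fin n) K} {Ax : X → Matrix (Fin n) (Fin n) K}
    (hA : ∀ i j, A i j =
      algebraMap K _ (A₀ i j) + ∑ ℓ, Ax ℓ i j • single (FreeMonoid.of ℓ) 1)
    (hB₀A₀ : B₀ * A₀ = 1) {g : Fin n → K[FreeMonoid X]} {v : Fin n → K}
    (hg : A *ᵥ g = algebraMap K _ ∘ v) (ℓ : X) (k : Fin n) :
    leftQuot (FreeMonoid.of ℓ) (g k) ∈ span K (Set.range g) := by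
  have hrow : ∀ i,
      ∑ j, A₀ i j • leftQuot (FreeMonoid.of ℓ) (g j) = -∑ j, Ax ℓ i j • g j := by
    intro i
    have h := congr_arg (leftQuot (FreeMonoid.of ℓ)) (congr_fun hg i)
    simp only [Matrix.mulVec, dotProduct, hA, map_sum, leftQuot_pencilEntry_mul,
      Finset.sum_add_distrib, Function.comp_apply] at h
    simpa [eq_neg_iff_add_eq_zero] using h
  have hk :
      leftQuot (FreeMonoid.of ℓ) (g k) = ∑ i, B₀ k i • -∑ j, Ax ℓ i j • g j := calc
    _ = ∑ j, (B₀ * A₀) k j • leftQuot (FreeMonoid.of ℓ) (g j) := by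
      simp [hB₀A₀, Matrix.one_apply]
    _ = ∑ i, B₀ k i • ∑ j, A₀ i j • leftQuot (FreeMonoid.of ℓ) (g j) := by
      simp only [Matrix.mul_apply, Finset.sum_smul, Finset.smul_sum, smul_smul]
      exact Finset.sum_comm
    _ = _ := by simp_rw [hrow]
  rw [hk]
  exact sum_mem fun i _ => smul_mem _ _ <| neg_mem <| sum_mem fun j _ =>
    smul_mem _ _ (subset_span ⟨j, rfl⟩)

theorem hankelRank_le_of_hasALSIn {f : K[FreeMonoid X]} {n : ℕ}
    (h : HasALSIn K (fun ℓ => single (FreeMonoid.of ℓ) 1) f n) : hankelRank f ≤ n := by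
  obtain ⟨hn, A, B, g, v, ⟨A₀, Ax, hA⟩, hAB, -, hg, rfl⟩ := hasALSIn_iff_mulVec.1 h
  have hB₀A₀ : B.map constCoeff * A₀ = 1 := by
    have hA₀ : A.map constCoeff = A₀ := by ext i j; simp [hA]
    have hAB₀ := congr_arg constCoeff.mapMatrix hAB
    rw [map_mul, map_one, RingHom.mapMatrix_apply, RingHom.mapMatrix_apply, hA₀] at hAB₀
    exact mul_eq_one_comm.1 hAB₀
  have := FiniteDimensional.span_of_finite K (Set.finite_range g)
  calc hankelRank (g ⟨0, hn⟩) ≤ finrank K (span K (Set.range g)) :=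
        Submodule.finrank_mono <| quotSpan_le_of_mem (subset_span ⟨_, rfl⟩) fun ℓ =>
          span_le.2 <| Set.range_subset_iff.2 <| leftQuot_mem_span_of_mulVec_eq hA hB₀A₀ hg ℓ
    _ ≤ n := (finrank_range_le_card g).trans_eq (Fintype.card_fin n)

end LowerBound

section Construction

theorem exists_basis_fin_apply_zero_eq {K V : Type*} [Field K] [AddCommGroup V] [Module K V]
    [FiniteDimensional K V] {y : V} (hy : y ≠ 0) :
    ∃ (h : 0 < finrank K V) (b : Basis (Fin (finrank K V)) K V), b ⟨0, h⟩ = y := by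
  have hli : LinearIndepOn K id ({y} : Set V) := (linearIndepOn_singleton_iff K).2 hy
  let b := Basis.extend hli
  let y' : hli.extend (Set.subset_univ _) := ⟨y, Basis.subset_extend hli rfl⟩
  have h : 0 < finrank K V := finrank_pos_iff_exists_ne_zero.2 ⟨y, hy⟩
  let e₀ := (Finite.equivFin _).trans (finCongr (finrank_eq_nat_card_basis b).symm)
  refine ⟨h, b.reindex (e₀.trans (Equiv.swap (e₀ y') ⟨0, h⟩)), ?_⟩
  rw [Basis.reindex_apply, Equiv.symm_trans_apply, Equiv.symm_swap, Equiv.swap_apply_right,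
    Equiv.symm_apply_apply, Basis.extend_apply_self]

theorem isNilpotent_sum_mul {X S : Type*} [Fintype X] [Ring S] (τ : FreeMonoid X →* S)
    (y : X → S)
    (hy : ∀ ℓ w, Commute (y ℓ) (τ w)) {k : ℕ} (hτ : ∀ w, w.length = k → τ w = 0) :
    IsNilpotent (∑ ℓ, y ℓ * τ (FreeMonoid.of ℓ)) := by
  set a := ∑ ℓ, y ℓ * τ (FreeMonoid.of ℓ)
  have hmul : ∀ n, ∀ z ∈ span S (τ '' {w | w.length = n}),
      z * a ∈ span S (τ '' {w | w.length = n + 1}) := by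
    intro n z hz
    induction hz using Submodule.span_induction with
    | mem _ h =>
      obtain ⟨w, hw : w.length = n, rfl⟩ := h
      rw [Finset.mul_sum]
      refine sum_mem fun ℓ _ => ?_
      rw [← mul_assoc, ← (hy ℓ w).eq, mul_assoc, ← map_mul]
      exact smul_mem _ (y ℓ) (subset_span ⟨_, by simp [hw], rfl⟩)
    | zero => simp
    | add _ _ _ _ h₁ h₂ => rw [add_mul]; exact add_mem h₁ h₂
    | smul c _ _ h => rw [smul_mul_assoc]; exact smul_mem _ c h
  have hpow : ∀ n, a ^ n ∈ span S (τ '' {w | w.length = n}) := by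
    intro n
    induction n with
    | zero => exact subset_span ⟨1, rfl, by simp⟩
    | succ n ih => rw [pow_succ]; exact hmul n _ ih
  refine ⟨k, (span_eq_bot.2 ?_).le (hpow k)⟩
  rintro _ ⟨w, hw, rfl⟩
  exact hτ w hw

variable {K : Type*} [Field K] {X : Type*}

def quotSpanEnd (f : K[FreeMonoid X]) (w : FreeMonoid X) : Module.End K (quotSpan f) :=
  (leftQuot w).restrict (quotSpan_le_comap_leftQuot w f)

@[simp]
theorem coe_quotSpanEnd_apply (f : K[FreeMonoid X]) (w : FreeMonoid X) (z : quotSpan f) :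
    (quotSpanEnd f w z : K[FreeMonoid X]) = leftQuot w z :=
  rfl

theorem quotSpanEnd_one (f : K[FreeMonoid X]) : quotSpanEnd f 1 = 1 := by
  ext; simp

theorem quotSpanEnd_mul (f : K[FreeMonoid X]) (u w : FreeMonoid X) :
    quotSpanEnd f (u * w) = quotSpanEnd f w * quotSpanEnd f u := by
  ext; simp [leftQuot_mul]

theorem quotSpanEnd_eq_zero {f : K[FreeMonoid X]} {w : FreeMonoid X}
    (hw : totalDegree f < w.length) :
    quotSpanEnd f w = 0 :=
  LinearMap.ext fun z => Subtype.ext (quotSpan_le_ker_leftQuot hw z.2)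

variable {ι : Type*} [Fintype ι] [DecidableEq ι]

/-- Transposed because left quotients compose contravariantly: `(u w)⁻¹ = w⁻¹ ∘ u⁻¹`. -/
def quotSpanMatrix (f : K[FreeMonoid X]) (b : Basis ι K (quotSpan f)) :
    FreeMonoid X →* Matrix ι ι K where
  toFun w := (LinearMap.toMatrix b b (quotSpanEnd f w))ᵀ
  map_one' := by
    rw [quotSpanEnd_one, LinearMap.toMatrix_one, Matrix.transpose_one]
  map_mul' u w := by
    rw [quotSpanEnd_mul, LinearMap.toMatrix_mul, Matrix.transpose_mul]

theorem sum_quotSpanMatrix_smul (f : K[FreeMonoid X]) (b : Basis ι K (quotSpan f))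
    (w : FreeMonoid X) (i : ι) :
    ∑ j, quotSpanMatrix f b w i j • (b j : K[FreeMonoid X]) = leftQuot w (b i) := by
  have h := congr_arg Subtype.val (b.sum_repr (quotSpanEnd f w (b i)))
  simp only [coe_sum, coe_smul, coe_quotSpanEnd_apply] at h
  simpa [quotSpanMatrix, LinearMap.toMatrix_apply] using h

variable [Fintype X]

def quotSpanTransition (f : K[FreeMonoid X]) (b : Basis ι K (quotSpan f)) :
    Matrix ι ι K[FreeMonoid X] :=
  ∑ ℓ, Matrix.scalar ι (single (FreeMonoid.of ℓ) 1) *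
    (quotSpanMatrix f b (FreeMonoid.of ℓ)).map (algebraMap K _)

theorem quotSpanTransition_apply (f : K[FreeMonoid X]) (b : Basis ι K (quotSpan f)) (i j : ι) :
    quotSpanTransition f b i j =
      ∑ ℓ, single (FreeMonoid.of ℓ) (quotSpanMatrix f b (FreeMonoid.of ℓ) i j) := by
  simp [quotSpanTransition, Matrix.sum_apply, single_mul_single]

theorem isNilpotent_quotSpanTransition (f : K[FreeMonoid X]) (b : Basis ι K (quotSpan f)) :
    IsNilpotent (quotSpanTransition f b) :=
  isNilpotent_sum_mul
    ((algebraMap K K[FreeMonoid X]).mapMatrix.toMonoidHom.comp (quotSpanMatrix f b)) _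
    (fun ℓ w => Matrix.scalar_commute_iff.2 (by ext; simp)) (k := totalDegree f + 1)
    fun w hw => by simp [quotSpanMatrix, quotSpanEnd_eq_zero (f := f) (w := w) (by omega)]

theorem isLinearPencilIn_one_sub_quotSpanTransition (f : K[FreeMonoid X]) {n : ℕ}
    (b : Basis (Fin n) K (quotSpan f)) :
    (1 - quotSpanTransition f b).IsLinearPencilIn K fun ℓ => single (FreeMonoid.of ℓ) 1 :=
  ⟨1, fun ℓ => -quotSpanMatrix f b (FreeMonoid.of ℓ), fun i j => by
    simp [quotSpanTransition_apply, Matrix.one_apply, sub_eq_add_neg]⟩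

theorem quotSpanTransition_mulVec (f : K[FreeMonoid X]) (b : Basis ι K (quotSpan f)) (i : ι) :
    (quotSpanTransition f b *ᵥ fun j => (b j : K[FreeMonoid X])) i =
      ∑ ℓ, single (FreeMonoid.of ℓ) 1 * leftQuot (FreeMonoid.of ℓ) (b i) := by
  simp only [← sum_quotSpanMatrix_smul f b, Finset.mul_sum, Matrix.mulVec, dotProduct,
    quotSpanTransition_apply, Finset.sum_mul, mul_smul_comm, ← smul_mul_assoc, smul_single',
    mul_one]
  exact Finset.sum_comm

theorem hasALSIn_hankelRank {f : K[FreeMonoid X]} (hf : f ≠ 0) :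
    HasALSIn K (fun ℓ => single (FreeMonoid.of ℓ) 1) f (hankelRank f) := by
  unfold hankelRank
  obtain ⟨hr, b, hb⟩ := exists_basis_fin_apply_zero_eq (K := K)
    (y := (⟨f, self_mem_quotSpan f⟩ : quotSpan f)) (by simpa using hf)
  have hunit := (isNilpotent_quotSpanTransition f b).isUnit_one_sub
  refine hasALSIn_iff_mulVec.2 ⟨hr, _, _, fun i => b i, fun i => (b i : K[FreeMonoid X]).coeff 1,
    isLinearPencilIn_one_sub_quotSpanTransition f b, hunit.mul_val_inv, hunit.val_inv_mul,
    funext fun i => ?_, congr_arg Subtype.val hb⟩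
  rw [Matrix.sub_mulVec, Matrix.one_mulVec, Pi.sub_apply, quotSpanTransition_mulVec,
    Function.comp_apply]
  exact sub_eq_of_eq_add (eq_single_one_add_sum_single_mul_leftQuot _)

end Construction

section FreeAlgebra

variable {K : Type*} [Field K] {X : Type*} [Fintype X]

theorem hasALS_iff_hasALSIn_monoidAlgebra {p : FreeAlgebra K X} {n : ℕ} :
    HasALS p n ↔
      HasALSIn K (fun ℓ => single (FreeMonoid.of ℓ) 1) (equivMonoidAlgebraFreeMonoid p) n := by
  have hgen : equivMonoidAlgebraFreeMonoid ∘ ι K =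
      fun ℓ : X => single (FreeMonoid.of ℓ) (1 : K) := by
    funext ℓ; simp [equivMonoidAlgebraFreeMonoid]
  refine ⟨fun h => hgen ▸ (hasALS_iff_hasALSIn.1 h).map equivMonoidAlgebraFreeMonoid.toAlgHom,
    fun h => hasALS_iff_hasALSIn.2 ?_⟩
  have h' := h.map equivMonoidAlgebraFreeMonoid.symm.toAlgHom
  rw [← hgen, ← Function.comp_assoc] at h'
  simpa [Function.comp_def] using h'

theorem hasALS_hankelRank {p : FreeAlgebra K X} (hp : p ≠ 0) :
    HasALS p (hankelRank (equivMonoidAlgebraFreeMonoid p)) :=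
  hasALS_iff_hasALSIn_monoidAlgebra.2 (hasALSIn_hankelRank (by simpa using hp))

theorem alsRank_eq_hankelRank {p : FreeAlgebra K X} (hp : p ≠ 0) :
    alsRank p = hankelRank (equivMonoidAlgebraFreeMonoid p) :=
  le_antisymm (Nat.sInf_le (hasALS_hankelRank hp)) <| le_csInf ⟨_, hasALS_hankelRank hp⟩
    fun _ hn => hankelRank_le_of_hasALSIn (hasALS_iff_hasALSIn_monoidAlgebra.1 hn)

end FreeAlgebra

end

theorem alsRank_mul_general {K : Type*} [Field K] {X : Type*} [Fintype X]
    (p q : FreeAlgebra K X) (hp : p ≠ 0) (hq : q ≠ 0)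
    (np nq : ℕ)
    (hpmin : alsRank p = np)
    (hqmin : alsRank q = nq) :
    HasALS (p * q) (np + nq - 1) ∧ alsRank (p * q) = np + nq - 1 := by
  subst hpmin hqmin
  have hpq : p * q ≠ 0 := mul_ne_zero hp hq
  have hrank : alsRank (p * q) = alsRank p + alsRank q - 1 := by
    have h := hankelRank_mul (K := K) (p := equivMonoidAlgebraFreeMonoid p)
      (q := equivMonoidAlgebraFreeMonoid q) (by simpa using hp) (by simpa using hq)
    rw [alsRank_eq_hankelRank hp, alsRank_eq_hankelRank hq, alsRank_eq_hankelRank hpq, map_mul]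
    omega
  refine ⟨?_, hrank⟩
  rw [← hrank, alsRank_eq_hankelRank hpq]
  exact hasALS_hankelRank hpq

/-- Minimal polynomial multiplication: if `p, q ≠ 0` have minimal admissible
linear systems of dimensions `n_p, n_q ≥ 2`, then `pq` has a minimal ALS of
dimension `n_p + n_q − 1`, i.e. `rank(pq) = rank(p) + rank(q) − 1`. -/
theorem alsRank_mul {K : Type*} [Field K] {X : Type*} [Fintype X]
    (p q : FreeAlgebra K X) (hp : p ≠ 0) (hq : q ≠ 0)
    (np nq : ℕ) (hnp : 2 ≤ np) (hnq : 2 ≤ nq)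
    (hpALS : HasALS p np) (hpmin : alsRank p = np)
    (hqALS : HasALS q nq) (hqmin : alsRank q = nq) :
    HasALS (p * q) (np + nq - 1) ∧ alsRank (p * q) = np + nq - 1 :=
  alsRank_mul_general p q hp hq np nq hpmin hqmin
end

section
/- The free associative algebra K⟨X⟩ over a commutative field K is a similarity unique factorization domain: it is atomic, and whenever p₁p₂⋯p_m = q₁q₂⋯q_n with all p_i, q_j atoms, then m = n and there is a permutation σ of {1,…,m} such that p_i is similar to q_{σ(i)} for all i. -/
/-- Two elements of a ring are similar if the quotients by the right ideals
they generate are isomorphic as right modules. -/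
def SimilarElements {R : Type*} [Ring R] (p q : R) : Prop :=
  Nonempty ((R ⧸ Submodule.span Rᵐᵒᵖ ({p} : Set R)) ≃ₗ[Rᵐᵒᵖ]
            (R ⧸ Submodule.span Rᵐᵒᵖ ({q} : Set R)))

/-!
The degree `deg f` (maximal length of a word in `f`) satisfies Cohn's 2-term weak algorithm:
if `a x = b y ≠ 0` and `deg b ≤ deg a`, then `deg (a - b c) < deg a` for some `c`. Additivity of
the degree gives atomicity, and the Euclidean algorithm shows that two elements with a nonzero
common right multiple have a principal right ideal sum and a cyclic module of relations.

Uniqueness goes by induction on the length. If `p L = q M` with atoms `p, q`, then either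
`q = p w` with `w` a unit and one cancels `p`, or `pR + qR = R`; then the generating relation
`p s = q t` has `s ∼ q` and `t ∼ p`, with `s, t` atoms, and `L = s r`, `M = t r`. Factoring `r`
and applying the induction hypothesis twice, `p L ∼ t s r ∼ s t r ∼ q M`.
-/

open Submodule MulOpposite

section Similarity

variable {R : Type*} [Ring R]

theorem mem_span_singleton_op_iff {p x : R} :
    x ∈ span Rᵐᵒᵖ ({p} : Set R) ↔ ∃ r, p * r = x :=
  mem_span_singleton.trans ⟨fun ⟨r, h⟩ => ⟨r.unop, h⟩, fun ⟨r, h⟩ => ⟨op r, h⟩⟩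

theorem SimilarElements.refl (p : R) : SimilarElements p p := ⟨LinearEquiv.refl _ _⟩

theorem SimilarElements.symm {p q : R} (h : SimilarElements p q) : SimilarElements q p :=
  h.map LinearEquiv.symm

theorem SimilarElements.trans {p q r : R} (h₁ : SimilarElements p q) (h₂ : SimilarElements q r) :
    SimilarElements p r :=
  ⟨h₁.some.trans h₂.some⟩

theorem similarElements_mul_isUnit {w : R} (hw : IsUnit w) (p : R) :
    SimilarElements p (p * w) :=
  ⟨quotEquivOfEq _ _ (by rw [← op_smul_eq_mul, span_singleton_smul_eq hw.op])⟩

theorem similarElements_isUnit_mul {u : R} (hu : IsUnit u) (p : R) :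
    SimilarElements p (u * p) := by
  obtain ⟨u, rfl⟩ := hu
  refine ⟨Submodule.Quotient.equiv _ _ (DistribMulAction.toLinearEquiv Rᵐᵒᵖ R u) ?_⟩
  rw [map_span, Set.image_singleton]
  rfl

/-- Left multiplication by `p` induces `R/sR ≅ R/qR`: it is onto by comaximality, with kernel
`sR` by the choice of `(s, t)`. -/
theorem similarElements_of_comaximal {p q s t u v : R} (hco : p * u + q * v = 1)
    (hrel : p * s = q * t) (hker : ∀ x y, p * x = q * y → ∃ r, x = s * r) :
    SimilarElements s q := by
  let f := (span Rᵐᵒᵖ ({q} : Set R)).mkQ ∘ₗ DistribSMul.toLinearMap Rᵐᵒᵖ R p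
  have hf : ∀ x, f x = Submodule.Quotient.mk (p * x) := fun _ => rfl
  have hsurj : Function.Surjective f := by
    intro w
    obtain ⟨z, rfl⟩ := Submodule.Quotient.mk_surjective _ w
    have hz : p * (u * z) + q * (v * z) = z := by
      rw [← mul_assoc, ← mul_assoc, ← add_mul, hco, one_mul]
    refine ⟨u * z, ?_⟩
    rw [hf, Submodule.Quotient.eq, mem_span_singleton_op_iff]
    exact ⟨-(v * z), by rw [mul_neg, neg_eq_iff_eq_neg, neg_sub, eq_sub_iff_add_eq', hz]⟩
  have hker' : LinearMap.ker f = span Rᵐᵒᵖ ({s} : Set R) := by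
    ext x
    rw [LinearMap.mem_ker, hf, Submodule.Quotient.mk_eq_zero, mem_span_singleton_op_iff,
      mem_span_singleton_op_iff]
    constructor
    · rintro ⟨y, hy⟩
      obtain ⟨r, rfl⟩ := hker x y hy.symm
      exact ⟨r, rfl⟩
    · rintro ⟨r, rfl⟩
      exact ⟨t * r, by rw [← mul_assoc, ← mul_assoc, hrel]⟩
  exact ⟨(quotEquivOfEq _ _ hker'.symm).trans (f.quotKerEquivOfSurjective hsurj)⟩

end Similarity

section Lists

variable {R : Type*} [Ring R]

def SimilarUpToPerm (L M : List R) : Prop :=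
  ∃ σ : Fin L.length ≃ Fin M.length, ∀ i, SimilarElements (L.get i) (M.get (σ i))

namespace SimilarUpToPerm

theorem length_eq {L M : List R} (h : SimilarUpToPerm L M) : L.length = M.length := by
  obtain ⟨σ, -⟩ := h
  simpa using Fintype.card_congr σ

theorem nil : SimilarUpToPerm ([] : List R) [] :=
  ⟨Equiv.refl _, fun i => i.elim0⟩

theorem trans {L M N : List R} (h₁ : SimilarUpToPerm L M) (h₂ : SimilarUpToPerm M N) :
    SimilarUpToPerm L N := by
  obtain ⟨σ, hσ⟩ := h₁
  obtain ⟨τ, hτ⟩ := h₂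
  exact ⟨σ.trans τ, fun i => (hσ i).trans (hτ (σ i))⟩

theorem cons {p q : R} {L M : List R} (hpq : SimilarElements p q) (h : SimilarUpToPerm L M) :
    SimilarUpToPerm (p :: L) (q :: M) := by
  obtain ⟨σ, hσ⟩ := h
  refine ⟨(finSuccEquiv _).trans ((Equiv.optionCongr σ).trans (finSuccEquiv _).symm), fun i => ?_⟩
  induction i using Fin.cases with
  | zero => simpa using hpq
  | succ j => simpa using hσ j

theorem swap (a b : R) (L : List R) : SimilarUpToPerm (a :: b :: L) (b :: a :: L) := by
  refine ⟨Equiv.swap 0 1, fun i => ?_⟩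
  rcases i with ⟨_ | _ | k, hk⟩
  · simpa using SimilarElements.refl a
  · simpa using SimilarElements.refl b
  · rw [Equiv.swap_apply_of_ne_of_ne] <;> simp [Fin.ext_iff, SimilarElements.refl]

theorem cons_of_transposition {p q s t : R} {L M N : List R} (hpt : SimilarElements p t)
    (hsq : SimilarElements s q) (hL : SimilarUpToPerm L (s :: N))
    (hM : SimilarUpToPerm (t :: N) M) : SimilarUpToPerm (p :: L) (q :: M) :=
  ((hL.cons hpt).trans (swap t s N)).trans (hM.cons hsq)

end SimilarUpToPerm

end Lists

section FirPair

variable {R : Type*} [Ring R]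

/-- `a R + b R = d R` for some `d`, and the solutions of `a x = b y` form the cyclic right module
generated by one solution `(s, t)`. -/
structure IsFirPair (a b : R) : Prop where
  exists_gcd : ∃ d u v a₁ b₁ : R, a * u + b * v = d ∧ a = d * a₁ ∧ b = d * b₁
  exists_relation : ∃ s t : R, a * s = b * t ∧ ∀ x y, a * x = b * y → ∃ r, x = s * r ∧ y = t * r

namespace IsFirPair

theorem symm {a b : R} (h : IsFirPair a b) : IsFirPair b a := by
  obtain ⟨⟨d, u, v, a₁, b₁, hd, ha, hb⟩, ⟨s, t, hst, hker⟩⟩ := h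
  refine ⟨⟨d, v, u, b₁, a₁, by rwa [add_comm], hb, ha⟩, ⟨t, s, hst.symm, fun x y hxy => ?_⟩⟩
  obtain ⟨r, hx, hy⟩ := hker y x hxy.symm
  exact ⟨r, hy, hx⟩

theorem of_eq_mul [NoZeroDivisors R] {a b c : R} (hb : b ≠ 0) (h : a = b * c) : IsFirPair a b := by
  subst h
  refine ⟨⟨b, 0, 1, c, 1, by simp, rfl, (mul_one b).symm⟩, ⟨1, c, by simp, fun x y hxy => ?_⟩⟩
  exact ⟨x, (one_mul x).symm, (mul_left_cancel₀ hb (by rw [← hxy, mul_assoc])).symm⟩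

theorem of_sub_mul {a b c : R} (h : IsFirPair (a - b * c) b) : IsFirPair a b := by
  obtain ⟨⟨d, u, v, a₁, b₁, hd, ha, hb⟩, ⟨s, t, hst, hker⟩⟩ := h
  refine ⟨⟨d, u, v - c * u, a₁ + b₁ * c, b₁, ?_, ?_, hb⟩, ⟨s, t + c * s, ?_, fun x y hxy => ?_⟩⟩
  · rw [← hd]; noncomm_ring
  · rw [mul_add, ← ha, ← mul_assoc, ← hb]; abel
  · rw [mul_add, ← hst, ← mul_assoc]; noncomm_ring
  · obtain ⟨r, hx, hy⟩ := hker x (y - c * x) (by rw [sub_mul, hxy, mul_sub, mul_assoc])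
    refine ⟨r, hx, ?_⟩
    rw [add_mul, ← hy, mul_assoc, ← hx]; abel

end IsFirPair

end FirPair

def IsTwoFir (R : Type*) [Ring R] : Prop :=
  ∀ a b x y : R, a * x = b * y → a * x ≠ 0 → IsFirPair a b

section Monoid

variable {M : Type*} [Monoid M]

theorem Irreducible.isUnit_of_mul_eq_mul {p q s t : M} (hp : Irreducible p) (hq : Irreducible q)
    (h : p * s = q * t) (hs : IsUnit s) : IsUnit t :=
  (((irreducible_mul_isUnit hs).mpr hp).isUnit_or_isUnit h).resolve_left hq.not_isUnit

theorem eq_nil_of_isUnit_prod [IsDedekindFiniteMonoid M] {L : List M}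
    (hL : ∀ a ∈ L, Irreducible a) (h : IsUnit L.prod) : L = [] := by
  cases L with
  | nil => rfl
  | cons a L =>
    rw [List.prod_cons] at h
    exact absurd (isUnit_of_mul_isUnit_left h) (hL a List.mem_cons_self).not_isUnit

end Monoid

def HasAtomicFactorizations (R : Type*) [Ring R] : Prop :=
  ∀ p : R, p ≠ 0 → ¬IsUnit p → ∃ L : List R, (∀ a ∈ L, Irreducible a) ∧ L.prod = p

theorem HasAtomicFactorizations.exists_isUnit_mul_prod_eq {R : Type*} [Ring R]
    (hA : HasAtomicFactorizations R) {r : R} (hr : r ≠ 0) :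
    ∃ (w : R) (L : List R), IsUnit w ∧ (∀ a ∈ L, Irreducible a) ∧ w * L.prod = r := by
  by_cases hu : IsUnit r
  · exact ⟨r, [], hu, by simp, mul_one r⟩
  · obtain ⟨L, hL, rfl⟩ := hA r hr hu
    exact ⟨1, L, isUnit_one, hL, one_mul _⟩

section Uniqueness

variable {R : Type*} [Ring R] [IsDomain R]

theorem prod_ne_zero_of_irreducible {L : List R} (hL : ∀ a ∈ L, Irreducible a) : L.prod ≠ 0 :=
  List.prod_ne_zero fun h => (hL 0 h).ne_zero rfl

/-- If `s = a * b` with `a, b` non-units, the right ideal `p a R + q R` is neither `R` (else `a` is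
a unit) nor `q R` (else `b` is a unit), contradicting that `q` is an atom. -/
theorem IsTwoFir.irreducible_of_relation (hR : IsTwoFir R) {p q s t : R} (hq : Irreducible q)
    (hrel : p * s = q * t) (hps : p * s ≠ 0) (hker : ∀ x y, p * x = q * y → ∃ r, x = s * r)
    (hs : ¬IsUnit s) : Irreducible s := by
  refine ⟨hs, fun a b hab => ?_⟩
  by_contra! hab'
  subst hab
  obtain ⟨⟨d, u, v, a₁, q₁, hd, ha₁, hq₁⟩, -⟩ :=
    hR (p * a) q b t (by rw [mul_assoc, hrel]) (by rwa [mul_assoc])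
  rcases hq.isUnit_or_isUnit hq₁ with ⟨e, rfl⟩ | ⟨e, rfl⟩
  · have hco : p * a * u * ↑e⁻¹ = 1 - q * v * ↑e⁻¹ := by
      rw [eq_sub_iff_add_eq, ← add_mul, hd, Units.mul_inv]
    obtain ⟨r, hr⟩ := hker (a * u * ↑e⁻¹ * p - 1) (-(v * ↑e⁻¹ * p)) (by
      simp only [mul_sub, ← mul_assoc, hco]; noncomm_ring)
    refine hab'.1 (IsUnit.of_mul_eq_one (u * ↑e⁻¹ * p - b * r) ?_)
    rw [mul_sub, ← mul_assoc a b, ← hr]; noncomm_ring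
  · obtain ⟨r, hr⟩ := hker a (↑e⁻¹ * a₁) (by
      rw [ha₁, hq₁, mul_assoc d, Units.mul_inv_cancel_left])
    have ha : a ≠ 0 := by rintro rfl; simp at hps
    exact hab'.2 (IsUnit.of_mul_eq_one r
      (mul_left_cancel₀ ha (by rw [← mul_assoc, ← hr, mul_one])))

theorem IsTwoFir.associated_or_exists_transposition (hR : IsTwoFir R) {p q x y : R}
    (hp : Irreducible p) (hq : Irreducible q) (h : p * x = q * y) (h0 : p * x ≠ 0) :
    Associated p q ∨ ∃ s t r, Irreducible s ∧ Irreducible t ∧ SimilarElements s q ∧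
      SimilarElements p t ∧ x = s * r ∧ y = t * r := by
  obtain ⟨⟨d, u, v, p₁, q₁, hd, hp₁, hq₁⟩, ⟨s, t, hst, hker⟩⟩ := hR p q x y h h0
  obtain hdu | ⟨e, rfl⟩ := (em (IsUnit d)).symm
  · obtain ⟨e₁, rfl⟩ := (hp.isUnit_or_isUnit hp₁).resolve_left hdu
    obtain ⟨e₂, rfl⟩ := (hq.isUnit_or_isUnit hq₁).resolve_left hdu
    exact Or.inl ⟨e₁⁻¹ * e₂, by rw [hp₁, hq₁, Units.val_mul, mul_assoc, Units.mul_inv_cancel_left]⟩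
  obtain ⟨r, hxr, hyr⟩ := hker x y h
  by_cases hs : IsUnit s
  · have ht : IsUnit t := hp.isUnit_of_mul_eq_mul hq hst hs
    refine Or.inl ⟨hs.unit * ht.unit⁻¹, ?_⟩
    rw [Units.val_mul, IsUnit.unit_spec, ← mul_assoc, hst, mul_assoc, IsUnit.mul_val_inv, mul_one]
  have ht : ¬IsUnit t := fun ht => hs (hq.isUnit_of_mul_eq_mul hp hst.symm ht)
  have hco : p * (u * ↑e⁻¹) + q * (v * ↑e⁻¹) = 1 := by
    simp only [← mul_assoc, ← add_mul, hd, Units.mul_inv]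
  have hps : p * s ≠ 0 := left_ne_zero_of_mul (by rwa [mul_assoc, ← hxr])
  have hqt : q * t ≠ 0 := hst ▸ hps
  refine Or.inr ⟨s, t, r, ?_, ?_, ?_, ?_, hxr, hyr⟩
  · exact hR.irreducible_of_relation hq hst hps
      (fun x y hxy => (hker x y hxy).imp fun _ => And.left) hs
  · exact hR.irreducible_of_relation hp hst.symm hqt
      (fun x y hxy => (hker y x hxy.symm).imp fun _ => And.right) ht
  · exact similarElements_of_comaximal hco hst fun x y hxy => (hker x y hxy).imp fun _ => And.left
  · exact (similarElements_of_comaximal (by rwa [add_comm] at hco) hst.symm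
      fun x y hxy => (hker y x hxy.symm).imp fun _ => And.right).symm

theorem IsTwoFir.similarUpToPerm_of_prod_eq_isUnit_mul (hR : IsTwoFir R)
    (hA : HasAtomicFactorizations R) {L M : List R} {w : R} (hw : IsUnit w)
    (hL : ∀ a ∈ L, Irreducible a) (hM : ∀ a ∈ M, Irreducible a) (h : L.prod = w * M.prod) :
    SimilarUpToPerm L M := by
  match L, M with
  | [], M =>
    rw [List.prod_nil] at h
    rw [eq_nil_of_isUnit_prod hM (isUnit_of_mul_isUnit_right (h ▸ isUnit_one))]
    exact .nil
  | p :: L, [] =>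
    rw [List.prod_nil, mul_one] at h
    exact absurd (eq_nil_of_isUnit_prod hL (h ▸ hw)) (List.cons_ne_nil _ _)
  | p :: L, q :: M =>
    have hp := hL p List.mem_cons_self
    have hL' : ∀ a ∈ L, Irreducible a := fun a ha => hL a (List.mem_cons_of_mem _ ha)
    have hM' : ∀ a ∈ M, Irreducible a := fun a ha => hM a (List.mem_cons_of_mem _ ha)
    have hwq : Irreducible (w * q) := (irreducible_isUnit_mul hw).mpr (hM q List.mem_cons_self)
    have hqw : SimilarElements (w * q) q := (similarElements_isUnit_mul hw q).symm
    have hprod : p * L.prod = w * q * M.prod := by simpa [mul_assoc] using h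
    rcases hR.associated_or_exists_transposition hp hwq hprod
      (prod_ne_zero_of_irreducible hL) with ⟨v, hv⟩ | ⟨s, t, r, hs, ht, hsq, hpt, hLr, hMr⟩
    · have hLM : L.prod = v * M.prod :=
        mul_left_cancel₀ hp.ne_zero (by rw [hprod, ← hv, mul_assoc])
      have hpq : SimilarElements p (w * q) := hv ▸ similarElements_mul_isUnit v.isUnit p
      exact .cons (hpq.trans hqw)
        (hR.similarUpToPerm_of_prod_eq_isUnit_mul hA v.isUnit hL' hM' hLM)
    · have hr : r ≠ 0 := right_ne_zero_of_mul (hLr ▸ prod_ne_zero_of_irreducible hL')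
      obtain ⟨v, Rs, hv, hRs, rfl⟩ := hA.exists_isUnit_mul_prod_eq hr
      have hs' := List.forall_mem_cons.mpr ⟨(irreducible_mul_isUnit hv).mpr hs, hRs⟩
      have ht' := List.forall_mem_cons.mpr ⟨(irreducible_mul_isUnit hv).mpr ht, hRs⟩
      have h₁ : SimilarUpToPerm L (s * v :: Rs) :=
        hR.similarUpToPerm_of_prod_eq_isUnit_mul hA isUnit_one hL' hs'
          (by rw [hLr, one_mul, List.prod_cons, mul_assoc])
      have h₂ : SimilarUpToPerm (t * v :: Rs) M :=
        hR.similarUpToPerm_of_prod_eq_isUnit_mul hA isUnit_one ht' hM'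
          (by rw [hMr, one_mul, List.prod_cons, mul_assoc])
      exact .cons_of_transposition (hpt.trans (similarElements_mul_isUnit hv t))
        ((similarElements_mul_isUnit hv s).symm.trans (hsq.trans hqw)) h₁ h₂
termination_by L.length
decreasing_by
  · simp
  · simp
  · simp [h₁.length_eq]

theorem IsTwoFir.similarUpToPerm_of_prod_eq (hR : IsTwoFir R) (hA : HasAtomicFactorizations R)
    {L M : List R} (hL : ∀ a ∈ L, Irreducible a) (hM : ∀ a ∈ M, Irreducible a)
    (h : L.prod = M.prod) : SimilarUpToPerm L M :=
  hR.similarUpToPerm_of_prod_eq_isUnit_mul hA isUnit_one hL hM (by rw [h, one_mul])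

end Uniqueness

section WeakAlgorithm

/-- A degree function for which `R` satisfies the 2-term weak algorithm. The value `deg 0` plays no
role, hence the alternative `a - b * c = 0`. -/
structure TwoTermWeakAlgorithm (R : Type*) [Ring R] where
  deg : R → ℕ
  deg_mul {a b : R} : a ≠ 0 → b ≠ 0 → deg (a * b) = deg a + deg b
  isUnit_of_deg_eq_zero {a : R} : a ≠ 0 → deg a = 0 → IsUnit a
  exists_deg_sub_mul_lt {a b x y : R} : a * x = b * y → a * x ≠ 0 → deg b ≤ deg a →
    ∃ c, a - b * c = 0 ∨ deg (a - b * c) < deg a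

namespace TwoTermWeakAlgorithm

variable {R : Type*} [Ring R]

def comap {S : Type*} [Ring S] (D : TwoTermWeakAlgorithm S) (e : R ≃+* S) :
    TwoTermWeakAlgorithm R where
  deg a := D.deg (e a)
  deg_mul ha hb := by
    simpa only [map_mul] using D.deg_mul (e.map_ne_zero_iff.mpr ha) (e.map_ne_zero_iff.mpr hb)
  isUnit_of_deg_eq_zero ha h :=
    (isUnit_map_iff e _).mp (D.isUnit_of_deg_eq_zero (e.map_ne_zero_iff.mpr ha) h)
  exists_deg_sub_mul_lt {a b x y} h h0 hle := by
    obtain ⟨c, hc⟩ := D.exists_deg_sub_mul_lt (by simpa only [map_mul] using congrArg e h)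
      (by simpa only [map_mul] using e.map_ne_zero_iff.mpr h0) hle
    have he : e (a - b * e.symm c) = e a - e b * c := by simp
    exact ⟨e.symm c, by rwa [← he, map_eq_zero_iff e e.injective] at hc⟩

theorem deg_pos (D : TwoTermWeakAlgorithm R) {a : R} (ha : a ≠ 0) (hu : ¬IsUnit a) :
    0 < D.deg a :=
  Nat.pos_of_ne_zero fun h => hu (D.isUnit_of_deg_eq_zero ha h)

theorem hasAtomicFactorizations (D : TwoTermWeakAlgorithm R) : HasAtomicFactorizations R := by
  intro p hp hu
  induction hn : D.deg p using Nat.strong_induction_on generalizing p with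
  | _ n ih =>
  by_cases hirr : Irreducible p
  · exact ⟨[p], by simpa using hirr, by simp⟩
  obtain ⟨a, b, rfl, ha, hb⟩ : ∃ a b, p = a * b ∧ ¬IsUnit a ∧ ¬IsUnit b := by
    simpa [irreducible_iff, hu] using hirr
  have ha0 := left_ne_zero_of_mul hp
  have hb0 := right_ne_zero_of_mul hp
  have hdeg := D.deg_mul ha0 hb0
  obtain ⟨La, hLa, rfl⟩ := ih _ (by have := D.deg_pos hb0 hb; omega) a ha0 ha rfl
  obtain ⟨Lb, hLb, rfl⟩ := ih _ (by have := D.deg_pos ha0 ha; omega) b hb0 hb rfl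
  exact ⟨La ++ Lb, fun x hx => (List.mem_append.mp hx).elim (hLa x) (hLb x), List.prod_append⟩

theorem isTwoFir [NoZeroDivisors R] (D : TwoTermWeakAlgorithm R) : IsTwoFir R := by
  intro a b x y h h0
  induction hn : D.deg a + D.deg b using Nat.strong_induction_on generalizing a b x y with
  | _ n ih =>
  wlog hle : D.deg b ≤ D.deg a generalizing a b x y
  · exact (this b a y x h.symm (h ▸ h0) (by omega) (by omega)).symm
  have ha := left_ne_zero_of_mul h0
  have hx := right_ne_zero_of_mul h0
  have hb : b ≠ 0 := left_ne_zero_of_mul (h ▸ h0)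
  obtain ⟨c, hc⟩ := D.exists_deg_sub_mul_lt h h0 hle
  by_cases hc0 : a - b * c = 0
  · exact .of_eq_mul hb (sub_eq_zero.mp hc0)
  have hlt := hc.resolve_left hc0
  exact .of_sub_mul (ih _ (by omega) (a - b * c) b x (y - c * x)
    (by rw [sub_mul, h, mul_sub, mul_assoc]) (mul_ne_zero hc0 hx) rfl)

end TwoTermWeakAlgorithm

end WeakAlgorithm

namespace FreeMonoid

variable {X : Type*}

theorem eq_and_eq_of_mul_eq_mul {u v u' v' : FreeMonoid X} (h : u * v = u' * v')
    (hl : u.length = u'.length) : u = u' ∧ v = v' :=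
  List.append_inj h hl

theorem exists_mul_eq_of_le_length {w : FreeMonoid X} {n : ℕ} (h : n ≤ w.length) :
    ∃ u v, w = u * v ∧ u.length = n :=
  ⟨ofList (w.toList.take n), ofList (w.toList.drop n), (List.take_append_drop n _).symm,
    by simpa [length] using h⟩

end FreeMonoid

namespace MonoidAlgebra

open FreeMonoid

variable {K X : Type*}

section Semiring

variable [Semiring K]

def wordDegree (f : MonoidAlgebra K (FreeMonoid X)) : ℕ :=
  f.coeff.support.sup length

noncomputable def leftQuotient (w : FreeMonoid X) (f : MonoidAlgebra K (FreeMonoid X)) :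
    MonoidAlgebra K (FreeMonoid X) :=
  ofCoeff (f.coeff.comapDomain (w * ·) (mul_right_injective w).injOn)

variable {f g : MonoidAlgebra K (FreeMonoid X)}

@[simp]
theorem coeff_leftQuotient (w v : FreeMonoid X) : (leftQuotient w f).coeff v = f.coeff (w * v) :=
  rfl

theorem length_le_wordDegree {w : FreeMonoid X} (h : f.coeff w ≠ 0) : w.length ≤ f.wordDegree :=
  Finset.le_sup (Finsupp.mem_support_iff.mpr h)

theorem coeff_eq_zero_of_wordDegree_lt {w : FreeMonoid X} (h : f.wordDegree < w.length) :
    f.coeff w = 0 := by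
  by_contra hw
  exact (length_le_wordDegree hw).not_gt h

theorem wordDegree_le {n : ℕ} (h : ∀ w, f.coeff w ≠ 0 → w.length ≤ n) : f.wordDegree ≤ n :=
  Finset.sup_le fun w hw => h w (Finsupp.mem_support_iff.mp hw)

theorem exists_coeff_ne_zero_length_eq (hf : f ≠ 0) :
    ∃ w, f.coeff w ≠ 0 ∧ w.length = f.wordDegree := by
  obtain ⟨w, hw, hsup⟩ := f.coeff.support.exists_mem_eq_sup
    (Finsupp.support_nonempty_iff.mpr (coeff_eq_zero.not.mpr hf)) length
  exact ⟨w, Finsupp.mem_support_iff.mp hw, hsup.symm⟩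

theorem eq_zero_or_wordDegree_lt {n : ℕ} (h : ∀ w, n ≤ w.length → f.coeff w = 0) :
    f = 0 ∨ f.wordDegree < n := by
  refine or_iff_not_imp_left.mpr fun hf => ?_
  obtain ⟨w, hw, hlen⟩ := exists_coeff_ne_zero_length_eq hf
  exact lt_of_not_ge fun hn => hw (h w (hlen ▸ hn))

theorem wordDegree_mul_le : (f * g).wordDegree ≤ f.wordDegree + g.wordDegree := by
  classical
  refine wordDegree_le fun w hw => ?_
  obtain ⟨u, hu, v, hv, rfl⟩ :=
    Finset.mem_mul.mp (support_coeff_mul_subset f g (Finsupp.mem_support_iff.mpr hw))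
  rw [length_mul]
  exact add_le_add (Finset.le_sup hu) (Finset.le_sup hv)

theorem coeff_mul_mul_of_wordDegree_le {u v : FreeMonoid X} (hf : f.wordDegree ≤ u.length)
    (hg : g.wordDegree ≤ v.length) : (f * g).coeff (u * v) = f.coeff u * g.coeff v := by
  refine coeff_mul_mul_of_uniqueMul fun u' v' hu' hv' h => eq_and_eq_of_mul_eq_mul h ?_
  have := congrArg length h
  have := Finset.le_sup (f := length) hu'
  have := Finset.le_sup (f := length) hv'
  simp only [length_mul] at *
  unfold wordDegree at hf hg
  omega

theorem wordDegree_mul [NoZeroDivisors K] (hf : f ≠ 0) (hg : g ≠ 0) :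
    (f * g).wordDegree = f.wordDegree + g.wordDegree := by
  refine wordDegree_mul_le.antisymm ?_
  obtain ⟨u, hu, hul⟩ := exists_coeff_ne_zero_length_eq hf
  obtain ⟨v, hv, hvl⟩ := exists_coeff_ne_zero_length_eq hg
  rw [← hul, ← hvl, ← length_mul]
  refine length_le_wordDegree ?_
  rw [coeff_mul_mul_of_wordDegree_le hul.ge hvl.ge]
  exact mul_ne_zero hu hv

end Semiring

variable [DivisionRing K] {a b : MonoidAlgebra K (FreeMonoid X)}

theorem isUnit_of_wordDegree_eq_zero (ha : a ≠ 0) (h : a.wordDegree = 0) : IsUnit a := by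
  have hconst : a = singleOneRingHom (a.coeff 1) := by
    ext w
    by_cases hw : w = 1
    · subst hw; simp
    · have hlen : 0 < w.length := Nat.pos_of_ne_zero (mt length_eq_zero.mp hw)
      rw [coeff_eq_zero_of_wordDegree_lt (h ▸ hlen)]
      simp [Ne.symm hw]
  have h1 : a.coeff 1 ≠ 0 := fun h1 => ha (by rw [hconst, h1, map_zero])
  exact hconst ▸ (isUnit_iff_ne_zero.mpr h1).map singleOneRingHom

/-- Comparing coefficients of `a * x = b * y` at `u * z * z₀`, with `z₀` a top-degree word of `x`,
gives `a(u * z) = b(u) * y(z * z₀) * x(z₀)⁻¹` whenever `|u| = deg b`. Hence `a` agrees in top degree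
with `b * c`, where `c(z) = b(w₀)⁻¹ * a(w₀ * z)` for a fixed top-degree word `w₀` of `b`. -/
theorem exists_wordDegree_sub_mul_lt {x y : MonoidAlgebra K (FreeMonoid X)} (h : a * x = b * y)
    (h0 : a * x ≠ 0) (hle : b.wordDegree ≤ a.wordDegree) :
    ∃ c, a - b * c = 0 ∨ (a - b * c).wordDegree < a.wordDegree := by
  have ha := left_ne_zero_of_mul h0
  have hx := right_ne_zero_of_mul h0
  have hb := left_ne_zero_of_mul (h ▸ h0)
  have hy := right_ne_zero_of_mul (h ▸ h0)
  have hdeg := wordDegree_mul ha hx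
  rw [h, wordDegree_mul hb hy] at hdeg
  obtain ⟨w₀, hw₀, hw₀l⟩ := exists_coeff_ne_zero_length_eq hb
  obtain ⟨z₀, hz₀, hz₀l⟩ := exists_coeff_ne_zero_length_eq hx
  have key : ∀ u z : FreeMonoid X, u.length = b.wordDegree →
      z.length = a.wordDegree - b.wordDegree →
      a.coeff (u * z) = b.coeff u * y.coeff (z * z₀) * (x.coeff z₀)⁻¹ := by
    intro u z hu hz
    rw [eq_mul_inv_iff_mul_eq₀ hz₀, ← coeff_mul_mul_of_wordDegree_le (by rw [length_mul]; omega)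
      hz₀l.ge, h, mul_assoc, coeff_mul_mul_of_wordDegree_le hu.ge (by rw [length_mul]; omega)]
  set c := (b.coeff w₀)⁻¹ • leftQuotient w₀ a
  have hc : c.wordDegree ≤ a.wordDegree - b.wordDegree := by
    refine wordDegree_le fun v hv => ?_
    have hv' : a.coeff (w₀ * v) ≠ 0 := right_ne_zero_of_mul (by simpa [c] using hv)
    have := length_le_wordDegree hv'
    rw [length_mul] at this
    omega
  refine ⟨c, eq_zero_or_wordDegree_lt fun w hw => ?_⟩
  rw [coeff_sub, Finsupp.sub_apply, sub_eq_zero]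
  rcases hw.lt_or_eq with hw | hw
  · rw [coeff_eq_zero_of_wordDegree_lt hw, coeff_eq_zero_of_wordDegree_lt
      (wordDegree_mul_le.trans_lt (by omega))]
  · obtain ⟨u, z, rfl, hu⟩ := exists_mul_eq_of_le_length (hle.trans hw.le)
    rw [length_mul] at hw
    rw [coeff_mul_mul_of_wordDegree_le hu.ge (hc.trans (by omega)), coeff_smul_apply,
      coeff_leftQuotient, key u z hu (by omega), key w₀ z hw₀l (by omega), smul_eq_mul,
      mul_assoc, mul_assoc, inv_mul_cancel_left₀ hw₀]

noncomputable def twoTermWeakAlgorithm :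
    TwoTermWeakAlgorithm (MonoidAlgebra K (FreeMonoid X)) where
  deg := wordDegree
  deg_mul := wordDegree_mul
  isUnit_of_deg_eq_zero := isUnit_of_wordDegree_eq_zero
  exists_deg_sub_mul_lt := exists_wordDegree_sub_mul_lt

end MonoidAlgebra

/-- The free associative algebra is a similarity unique factorization domain:
it is atomic and factorizations into atoms are unique up to permutation and
similarity of the factors. -/
theorem freeAlgebra_similarity_UFD {K X : Type*} [Field K] :
    (∀ p : FreeAlgebra K X, p ≠ 0 → ¬ IsUnit p →
      ∃ L : List (FreeAlgebra K X), (∀ a ∈ L, Irreducible a) ∧ L.prod = p) ∧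
    (∀ L M : List (FreeAlgebra K X),
      (∀ a ∈ L, Irreducible a) → (∀ a ∈ M, Irreducible a) →
      L.prod = M.prod →
      L.length = M.length ∧
        ∃ σ : Fin L.length ≃ Fin M.length,
          ∀ i, SimilarElements (L.get i) (M.get (σ i))) := by
  let D : TwoTermWeakAlgorithm (FreeAlgebra K X) :=
    MonoidAlgebra.twoTermWeakAlgorithm.comap FreeAlgebra.equivMonoidAlgebraFreeMonoid.toRingEquiv
  refine ⟨D.hasAtomicFactorizations, fun L M hL hM h => ?_⟩
  have hLM := D.isTwoFir.similarUpToPerm_of_prod_eq D.hasAtomicFactorizations hL hM h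
  exact ⟨hLM.length_eq, hLM⟩
end
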